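/- In the full standard model ℛ of second-order arithmetic, for every finite tuple of real parameters b̄, there exist continuum-many b̄-typical reals and fewer than continuum-many non-b̄-typical reals, using that cf(2^{ℵ₀}) > ℵ₀. -/

import Mathlib

open Cardinal FirstOrder

/-- The language of (full) second-order arithmetic, rendered one-sorted:
two constants `0, 1`, two binary functions `+, ·`, and two binary relations
`<, ∈` (indexed by `Bool`). -/
def L2 : FirstOrder.Language where
  Functions := fun n => match n with
    | 0 => Bool  -- the constants 0 and 1
    | 2 => Bool  -- the binary operations + and ·
    | _ => Empty
  Relations := fun n => match n with
    | 2 => Bool  -- the binary relations < and ∈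
    | _ => Empty

/-- The domain of the full standard model `ℛ` of second-order arithmetic:
numbers together with reals (sets of numbers). -/
abbrev R2 : Type := ℕ ⊕ Set ℕ

/-- The full standard model `ℛ = (ω, 𝒫(ω), +, ·, <, ∈, 0, 1)`.  The arithmetic
operations are extended by `0` outside the number sort, and the relations
`<`, `∈` hold only for arguments of the appropriate sorts. -/
noncomputable instance L2StructureR2 : L2.Structure R2 where
  funMap {n} f x :=
    match n, f, x with
    | 0, b, _ => Sum.inl (cond b 1 0)
    | 2, b, x =>
      match x 0, x 1 with
      | Sum.inl m, Sum.inl k => Sum.inl (cond b (m + k) (m * k))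
      | _, _ => Sum.inl 0
  RelMap {n} r x :=
    match n, r, x with
    | 2, true, x => ∃ m k : ℕ, x 0 = Sum.inl m ∧ x 1 = Sum.inl k ∧ m < k
    | 2, false, x => ∃ (m : ℕ) (s : Set ℕ), x 0 = Sum.inl m ∧ x 1 = Sum.inr s ∧ m ∈ s

/-- `a` is typical relative to the tuple `b̄` of real parameters: every set
definable in `ℛ` with parameters among `b̄` and containing `a` has
continuum-many reals in it. -/
def Tp {k : ℕ} (bbar : Fin k → Set ℕ) (a : Set ℕ) : Prop :=
  ∀ s : Set R2, (Set.range (fun i => (Sum.inr (bbar i) : R2))).Definable₁ L2 s →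
    Sum.inr a ∈ s → #(↥{x : Set ℕ | Sum.inr x ∈ s}) = Cardinal.continuum

/-!
There are only countably many definable sets, so the non-typical reals lie in a countable union
of sets of size `< 𝔠`, which is still small because `cf 𝔠 > ℵ₀` (König). The typical reals form
the complement of a small set in `𝒫(ω)`, so there are `𝔠` of them.
-/

universe u

namespace Cardinal

theorem aleph0_lt_cof_continuum : ℵ₀ < continuum.ord.cof := by
  simpa only [two_power_aleph0] using lt_cof_ord_power le_rfl one_lt_two

theorem mk_biUnion_lt_of_lt_cof {ι α : Type u} {κ : Cardinal.{u}} (hκ : ℵ₀ ≤ κ) {I : Set ι}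
    (hI : #I < κ.ord.cof) {t : ι → Set α} (ht : ∀ i ∈ I, #(t i) < κ) :
    #(⋃ i ∈ I, t i) < κ :=
  (mk_biUnion_le t I).trans_lt <| mul_lt_of_lt hκ (hI.trans_le (Ordinal.cof_ord_le κ)) <|
    iSup_lt_of_lt_cof_ord hI fun i => ht i i.2

end Cardinal

namespace FirstOrder.Language

theorem countable_setOf_definable₁ {L : Language} [Countable L.Symbols] {M : Type*}
    [L.Structure M] (A : Set M) [Countable A] : {s : Set M | A.Definable₁ L s}.Countable := by
  refine (Set.countable_range fun φ : L[[A]].Formula (Fin 1) => {m | φ.Realize fun _ => m}).mono ?_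
  rintro s ⟨φ, hφ⟩
  refine ⟨φ, Set.ext fun m => ?_⟩
  change (fun _ : Fin 1 => m) ∈ Set.ofPred φ.Realize ↔ m ∈ s
  rw [← hφ]
  rfl

end FirstOrder.Language

instance (n : ℕ) : Countable (L2.Functions n) :=
  match n with
  | 0 | 2 => inferInstanceAs (Countable Bool)
  | 1 | _ + 3 => inferInstanceAs (Countable Empty)

instance (n : ℕ) : Countable (L2.Relations n) :=
  match n with
  | 2 => inferInstanceAs (Countable Bool)
  | 0 | 1 | _ + 3 => inferInstanceAs (Countable Empty)

instance : Countable L2.Symbols := inferInstanceAs (Countable (_ ⊕ _))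

theorem setOf_not_Tp_subset {k : ℕ} (bbar : Fin k → Set ℕ) :
    {a | ¬ Tp bbar a} ⊆
      ⋃ s ∈ {s : Set R2 | (Set.range (fun i => (Sum.inr (bbar i) : R2))).Definable₁ L2 s ∧
        #{x : Set ℕ | Sum.inr x ∈ s} < 𝔠}, {x : Set ℕ | Sum.inr x ∈ s} := by
  intro a ha
  simp only [Set.mem_ofPred_eq, Tp, not_forall] at ha
  obtain ⟨s, hs, has, hcard⟩ := ha
  have hle : #{x : Set ℕ | Sum.inr x ∈ s} ≤ 𝔠 := (mk_set_le _).trans mk_set_nat.le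
  exact Set.mem_biUnion ⟨hs, hle.lt_of_ne hcard⟩ has

/-- In the full standard model of second-order arithmetic, for every finite
tuple `b̄` of real parameters there are continuum-many `b̄`-typical reals and
fewer than continuum-many non-`b̄`-typical reals. -/
theorem typical_reals_card (k : ℕ) (bbar : Fin k → Set ℕ) :
    #(↥{a : Set ℕ | Tp bbar a}) = Cardinal.continuum ∧
    #(↥{a : Set ℕ | ¬ Tp bbar a}) < Cardinal.continuum := by
  have hsmall : #{a | ¬ Tp bbar a} < 𝔠 :=
    (mk_le_mk_of_subset (setOf_not_Tp_subset bbar)).trans_lt <|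
      mk_biUnion_lt_of_lt_cof aleph0_le_continuum
        (((Language.countable_setOf_definable₁ _).mono fun _ hs => hs.1).le_aleph0.trans_lt
          aleph0_lt_cof_continuum)
        fun _ hs => hs.2
  refine ⟨?_, hsmall⟩
  have := mk_compl_of_infinite _ (hsmall.trans_eq mk_set_nat.symm)
  simpa only [Set.compl_ofPred, not_not, mk_set_nat] using this
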